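/- arXiv:1205.0469 — 3 statements merged into one kernel-verified Lean document; each statement's English description precedes it below -/
import Mathlib

section
/- Let C > 0, γ > 0, δ > 0 and let W : [0,∞) → ℝ be differentiable with W(t) ≥ 0 and W'(t) ≤ C e^{−γt} W(t) + C e^{δt} √(W(t)) for all t ≥ 0. Then there exists a constant K > 0 such that W(t) ≤ K e^{2δt} for all t ≥ 0. -/
/-- Key growth estimate in the proof of geodesic completeness (Theorem 5.1): if `W ≥ 0` is
differentiable with `W' ≤ C e^{−γt} W + C e^{δt} √W` on `[0,∞)` (with `C, γ, δ > 0`),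
then `W(t) ≤ K e^{2δt}` for some constant `K > 0`. -/
theorem stmt_9 (C γ δ : ℝ) (hC : 0 < C) (hγ : 0 < γ) (hδ : 0 < δ)
    (W W' : ℝ → ℝ)
    (hWdiff : ∀ t, 0 ≤ t → HasDerivAt W (W' t) t)
    (hWnonneg : ∀ t, 0 ≤ t → 0 ≤ W t)
    (hW' : ∀ t, 0 ≤ t →
      W' t ≤ C * Real.exp (-γ * t) * W t + C * Real.exp (δ * t) * Real.sqrt (W t)) :
    ∃ K > (0 : ℝ), ∀ t, 0 ≤ t → W t ≤ K * Real.exp (2 * δ * t) := by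
  set M := C / (2 * γ) with hM
  have hM0 : 0 < M := by positivity
  set U : ℝ → ℝ := fun t => Real.sqrt (W t + 1) with hUdef
  set μ : ℝ → ℝ := fun t => Real.exp (M * Real.exp (-γ * t) - M) with hμdef
  set P : ℝ → ℝ := fun t => μ t * U t - (C / (2 * δ)) * Real.exp (δ * t) with hPdef
  have hUpos : ∀ t, 0 ≤ t → 0 < U t := fun t ht =>
    Real.sqrt_pos.2 (by linarith [hWnonneg t ht])
  have hUsq : ∀ t, 0 ≤ t → U t ^ 2 = W t + 1 := fun t ht =>
    Real.sq_sqrt (by linarith [hWnonneg t ht])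
  have hUderiv : ∀ t, 0 ≤ t → HasDerivAt U (W' t / (2 * U t)) t := by
    intro t ht
    have h := ((hWdiff t ht).add_const 1).sqrt (by nlinarith [hWnonneg t ht])
    simpa [hUdef] using h
  have hμderiv : ∀ t : ℝ, HasDerivAt μ (-(C / 2) * Real.exp (-γ * t) * μ t) t := by
    intro t
    have h1 : HasDerivAt (fun t : ℝ => -γ * t) (-γ) t := by
      simpa using (hasDerivAt_id t).const_mul (-γ)
    have h2 := h1.exp
    have h3 := (h2.const_mul M).sub_const M
    have h4 := h3.exp
    convert h4 using 1
    have h5 : M * γ = C / 2 := by rw [hM]; field_simp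
    simp only [hμdef]
    linear_combination (Real.exp (M * Real.exp (-γ * t) - M) * Real.exp (-γ * t)) * h5
  have hμpos : ∀ t : ℝ, 0 < μ t := fun t => Real.exp_pos _
  have hμle : ∀ t, 0 ≤ t → μ t ≤ 1 := by
    intro t ht
    apply Real.exp_le_one_iff.2
    have : Real.exp (-γ * t) ≤ 1 := Real.exp_le_one_iff.2 (by nlinarith)
    nlinarith
  have hμge : ∀ t, 0 ≤ t → Real.exp (-M) ≤ μ t := by
    intro t ht
    apply Real.exp_le_exp.2
    have : 0 < Real.exp (-γ * t) := Real.exp_pos _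
    nlinarith
  have hPderiv : ∀ t, 0 ≤ t → HasDerivAt P
      (-(C / 2) * Real.exp (-γ * t) * μ t * U t + μ t * (W' t / (2 * U t))
        - (C / (2 * δ)) * (Real.exp (δ * t) * δ)) t := by
    intro t ht
    have h1 := (hμderiv t).mul (hUderiv t ht)
    have h2 : HasDerivAt (fun t : ℝ => Real.exp (δ * t)) (Real.exp (δ * t) * δ) t := by
      simpa [mul_comm] using ((hasDerivAt_id t).const_mul δ).exp
    exact h1.sub (h2.const_mul _)
  have hPderiv_nonpos : ∀ t, 0 ≤ t →
      -(C / 2) * Real.exp (-γ * t) * μ t * U t + μ t * (W' t / (2 * U t))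
        - (C / (2 * δ)) * (Real.exp (δ * t) * δ) ≤ 0 := by
    intro t ht
    have hU := hUpos t ht
    have hUub : W' t / (2 * U t) ≤ (C / 2) * Real.exp (-γ * t) * U t
        + (C / 2) * Real.exp (δ * t) := by
      rw [div_le_iff₀ (by positivity)]
      have h1 : W t ≤ U t ^ 2 := by rw [hUsq t ht]; linarith
      have h2 : Real.sqrt (W t) ≤ U t :=
        Real.sqrt_le_sqrt (by linarith)
      have h3 := hW' t ht
      have he1 : (0:ℝ) < Real.exp (-γ * t) := Real.exp_pos _
      have he2 : (0:ℝ) < Real.exp (δ * t) := Real.exp_pos _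
      nlinarith [mul_le_mul_of_nonneg_left h1 (by positivity : (0:ℝ) ≤ C * Real.exp (-γ * t)),
        mul_le_mul_of_nonneg_left h2 (by positivity : (0:ℝ) ≤ C * Real.exp (δ * t))]
    have hC2 : (C / (2 * δ)) * (Real.exp (δ * t) * δ) = (C / 2) * Real.exp (δ * t) := by
      field_simp
    rw [hC2]
    have hμ1 := hμle t ht
    have hμ0 := hμpos t
    have he2 : (0:ℝ) < Real.exp (δ * t) := Real.exp_pos _
    nlinarith [mul_le_mul_of_nonneg_left hUub hμ0.le,
      mul_le_mul_of_nonneg_right hμ1 he2.le]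
  have hanti : AntitoneOn P (Set.Ici (0 : ℝ)) := by
    apply antitoneOn_of_deriv_nonpos (convex_Ici 0)
    · intro t ht
      exact (hPderiv t ht).continuousAt.continuousWithinAt
    · intro t ht
      rw [interior_Ici] at ht
      exact (hPderiv t (le_of_lt ht)).differentiableAt.differentiableWithinAt
    · intro t ht
      rw [interior_Ici] at ht
      rw [(hPderiv t (le_of_lt ht)).deriv]
      exact hPderiv_nonpos t (le_of_lt ht)
  refine ⟨(Real.exp M * (U 0 + C / (2 * δ))) ^ 2, by positivity, ?_⟩
  intro t ht
  have hP := hanti (Set.self_mem_Ici) ht ht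
  have hμ0 : μ 0 = 1 := by simp [hμdef]
  have hP0 : P 0 = U 0 - C / (2 * δ) := by simp [hPdef, hμ0]
  -- μ t * U t ≤ U 0 + (C/(2δ)) e^{δt} - C/(2δ) ≤ (U 0 + C/(2δ)) e^{δt}
  have he : (1:ℝ) ≤ Real.exp (δ * t) := Real.one_le_exp (by positivity)
  have hμU : μ t * U t ≤ (U 0 + C / (2 * δ)) * Real.exp (δ * t) := by
    have : P t ≤ U 0 - C / (2 * δ) := by rw [← hP0]; exact hP
    simp only [hPdef] at this
    have hc : 0 < C / (2 * δ) := by positivity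
    nlinarith [mul_le_mul_of_nonneg_left he (hUpos 0 le_rfl).le]
  have hUt : U t ≤ Real.exp M * (U 0 + C / (2 * δ)) * Real.exp (δ * t) := by
    have h1 := hμge t ht
    have h2 : Real.exp (-M) * U t ≤ (U 0 + C / (2 * δ)) * Real.exp (δ * t) :=
      le_trans (mul_le_mul_of_nonneg_right h1 (hUpos t ht).le) hμU
    have h3 : Real.exp (-M) * Real.exp M = 1 := by
      rw [← Real.exp_add]; simp
    have h4 : Real.exp (-M) * Real.exp M * U t = U t := by rw [h3]; ring
    nlinarith [mul_le_mul_of_nonneg_left h2 (Real.exp_pos M).le, h4]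
  have hWU : W t ≤ U t ^ 2 := by rw [hUsq t ht]; linarith
  have hexp : Real.exp (2 * δ * t) = Real.exp (δ * t) * Real.exp (δ * t) := by
    rw [← Real.exp_add]; ring_nf
  rw [hexp]
  have hU0 : 0 ≤ U t := (hUpos t ht).le
  have hR : 0 ≤ Real.exp M * (U 0 + C / (2 * δ)) := by
    have : 0 < U 0 := hUpos 0 le_rfl
    positivity
  nlinarith [hUt, mul_le_mul hUt hUt hU0 (by positivity : (0:ℝ) ≤ Real.exp M * (U 0 + C / (2 * δ)) * Real.exp (δ * t))]
end

section
/- Let n ≥ 1, let A₁ be a positive definite symmetric n×n real matrix and A₂ a symmetric n×n real matrix, and let ‖·‖ denote the Euclidean operator norm. Then ‖A₂‖ ≤ ‖A₁‖ · [tr(A₁⁻¹A₂A₁⁻¹A₂)]^{1/2}. -/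
/-!
Write `c = ‖A₁‖` and `M = A₁⁻¹`. The eigenvalues of `A₁` lie in `(0, c]`, so `1 ≤ c M` in the
Loewner order, and `P ↦ tr (X P)` is monotone in `X` for positive semidefinite `P`. Applying this
to `P = A₂²` and `P = A₂ M A₂` gives
`tr A₂² ≤ c tr (M A₂²) = c tr (A₂ M A₂) ≤ c² tr (M A₂ M A₂)`,
and `‖A₂‖²` is at most the squared Frobenius norm `tr A₂²`.
-/

/-- The Euclidean norm of a vector in `ℝⁿ`. -/
noncomputable def euclNorm {n : ℕ} (x : Fin n → ℝ) : ℝ := Real.sqrt (∑ i, x i ^ 2)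

/-- The Euclidean operator norm `‖A‖ = sup_{x ≠ 0} ‖Ax‖/‖x‖` of an `n×n` real matrix. -/
noncomputable def euclOpNorm {n : ℕ} (A : Matrix (Fin n) (Fin n) ℝ) : ℝ :=
  sSup ((fun x : Fin n → ℝ => euclNorm (A.mulVec x) / euclNorm x) '' {x : Fin n → ℝ | x ≠ 0})

open scoped Matrix.Norms.L2Operator MatrixOrder ComplexOrder
open Matrix

lemma euclNorm_eq_norm_toLp {k : ℕ} (x : Fin k → ℝ) : euclNorm x = ‖WithLp.toLp 2 x‖ := by
  simp [euclNorm, EuclideanSpace.norm_eq]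

lemma euclOpNorm_eq_l2_opNorm {k : ℕ} (A : Matrix (Fin k) (Fin k) ℝ) : euclOpNorm A = ‖A‖ := by
  have hratio : ∀ r ∈ (fun x => euclNorm (A *ᵥ x) / euclNorm x) '' {x | x ≠ 0}, r ≤ ‖A‖ := by
    rintro _ ⟨x, hx, rfl⟩
    dsimp only
    rw [euclNorm_eq_norm_toLp, euclNorm_eq_norm_toLp,
      div_le_iff₀ (norm_pos_iff.mpr (by simpa using hx))]
    exact l2_opNorm_mulVec A _
  refine le_antisymm (Real.sSup_le hratio (norm_nonneg A)) ?_
  rw [l2_opNorm_def]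
  refine ContinuousLinearMap.opNorm_le_bound _
    (Real.sSup_nonneg fun r ⟨x, _, hr⟩ => hr ▸ div_nonneg (Real.sqrt_nonneg _) (Real.sqrt_nonneg _))
    fun y => ?_
  rcases eq_or_ne y 0 with rfl | hy
  · simp
  have hle := le_csSup ⟨‖A‖, hratio⟩ ⟨y.ofLp, by simpa using hy, rfl⟩
  dsimp only at hle
  rw [euclNorm_eq_norm_toLp, euclNorm_eq_norm_toLp, WithLp.toLp_ofLp,
    div_le_iff₀ (norm_pos_iff.mpr hy)] at hle
  exact hle

namespace Matrix

variable {m n 𝕜 : Type*} [Fintype m] [Fintype n] [RCLike 𝕜]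

lemma trace_mul_le_trace_mul_of_le {P Q R : Matrix n n 𝕜} (hPQ : P ≤ Q) (hR : R.PosSemidef) :
    (P * R).trace ≤ (Q * R).trace := by
  classical
  obtain ⟨B, rfl⟩ := CStarAlgebra.nonneg_iff_eq_star_mul_self.mp hR.nonneg
  rw [← sub_nonneg, ← trace_sub, ← sub_mul, ← mul_assoc, trace_mul_cycle]
  exact ((le_iff.mp hPQ).mul_mul_conjTranspose_same B).trace_nonneg

variable [DecidableEq n]

lemma l2_opNorm_sq_le_trace_transpose_mul_self (A : Matrix m n ℝ) :
    ‖A‖ ^ 2 ≤ (Aᵀ * A).trace := by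
  have htrace : (Aᵀ * A).trace = ∑ i, ∑ j, A i j ^ 2 := by
    simp only [trace, diag_apply, mul_apply, transpose_apply, sq]
    exact Finset.sum_comm
  have ht : 0 ≤ (Aᵀ * A).trace := htrace ▸ by positivity
  have hmulVec (x : EuclideanSpace ℝ n) :
      ‖toEuclideanLin A x‖ ^ 2 ≤ (Aᵀ * A).trace * ‖x‖ ^ 2 := by
    simp only [EuclideanSpace.norm_sq_eq, Real.norm_eq_abs, sq_abs, htrace, toLpLin_apply,
      mulVec, dotProduct]
    rw [Finset.sum_mul]
    exact Finset.sum_le_sum fun i _ => Finset.sum_mul_sq_le_sq_mul_sq _ _ _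
  have hnorm : ‖A‖ ≤ √(Aᵀ * A).trace := by
    rw [l2_opNorm_def]
    refine ContinuousLinearMap.opNorm_le_bound _ (Real.sqrt_nonneg _) fun x => ?_
    rw [← pow_le_pow_iff_left₀ (norm_nonneg _) (by positivity) two_ne_zero, mul_pow,
      Real.sq_sqrt ht]
    exact hmulVec x
  calc ‖A‖ ^ 2 ≤ √(Aᵀ * A).trace ^ 2 := by gcongr
    _ = (Aᵀ * A).trace := Real.sq_sqrt ht

lemma PosDef.one_le_l2_opNorm_smul_inv {A : Matrix n n ℝ} (hA : A.PosDef) : 1 ≤ ‖A‖ • A⁻¹ := by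
  nontriviality (Matrix n n ℝ)
  have hcont (f : ℝ → ℝ) : ContinuousOn f (spectrum ℝ A) := A.finite_spectrum.continuousOn f
  have hinv : A⁻¹ = cfc (·⁻¹) A :=
    (nonsing_inv_eq_ringInverse A).trans (cfc_ringInverse_id (R := ℝ) A hA.isUnit).symm
  rw [hinv, ← cfc_smul _ _ A (hcont _), ← sub_nonneg, ← cfc_one ℝ A,
    ← cfc_sub _ _ A (hcont _) (hcont _)]
  refine cfc_nonneg fun x hx => ?_
  have hx₀ : 0 < x := hA.isStrictlyPositive.spectrum_pos hx
  have hxA : x ≤ ‖A‖ := (Real.le_norm_self x).trans (spectrum.norm_le_norm_of_mem hx)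
  simp only [smul_eq_mul, Pi.one_apply, sub_nonneg]
  rw [le_mul_inv_iff₀ hx₀]
  simpa using hxA

end Matrix

theorem stmt_14_general (n : ℕ) (A₁ A₂ : Matrix (Fin n) (Fin n) ℝ)
    (h₁pos : A₁.PosDef) (h₂symm : A₂.IsSymm) :
    euclOpNorm A₂ ≤ euclOpNorm A₁ * Real.sqrt ((A₁⁻¹ * A₂ * A₁⁻¹ * A₂).trace) := by
  rw [euclOpNorm_eq_l2_opNorm, euclOpNorm_eq_l2_opNorm]
  have hone := h₁pos.one_le_l2_opNorm_smul_inv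
  have hsq : (A₂ * A₂).PosSemidef := by
    simpa [h₂symm.eq] using posSemidef_conjTranspose_mul_self A₂
  have hmid : (A₂ * A₁⁻¹ * A₂).PosSemidef := by
    simpa [h₂symm.eq] using h₁pos.inv.posSemidef.mul_mul_conjTranspose_same A₂
  have hsq_norm : ‖A₂‖ ^ 2 ≤ ‖A₁‖ ^ 2 * (A₁⁻¹ * A₂ * A₁⁻¹ * A₂).trace :=
    calc ‖A₂‖ ^ 2 ≤ (1 * (A₂ * A₂)).trace :=
          by simpa [h₂symm.eq] using l2_opNorm_sq_le_trace_transpose_mul_self A₂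
      _ ≤ ((‖A₁‖ • A₁⁻¹) * (A₂ * A₂)).trace := trace_mul_le_trace_mul_of_le hone hsq
      _ = ‖A₁‖ * (1 * (A₂ * A₁⁻¹ * A₂)).trace := by
          rw [smul_mul, trace_smul, one_mul, ← mul_assoc, trace_mul_cycle, smul_eq_mul]
      _ ≤ ‖A₁‖ * ((‖A₁‖ • A₁⁻¹) * (A₂ * A₁⁻¹ * A₂)).trace := by
          gcongr
          exact trace_mul_le_trace_mul_of_le hone hmid
      _ = ‖A₁‖ ^ 2 * (A₁⁻¹ * A₂ * A₁⁻¹ * A₂).trace := by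
          rw [smul_mul, trace_smul, smul_eq_mul, ← mul_assoc, ← mul_assoc, ← mul_assoc, sq]
  rw [← Real.sqrt_sq (norm_nonneg A₁), ← Real.sqrt_mul (sq_nonneg _)]
  exact Real.le_sqrt_of_sq_le hsq_norm

/-- Inequality (2.28) of the paper: for `A₁` positive definite symmetric and `A₂`
symmetric, `‖A₂‖ ≤ ‖A₁‖ · [tr(A₁⁻¹A₂A₁⁻¹A₂)]^{1/2}`. -/
theorem stmt_14 (n : ℕ) (hn : 1 ≤ n) (A₁ A₂ : Matrix (Fin n) (Fin n) ℝ)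
    (h₁symm : A₁.IsSymm) (h₁pos : A₁.PosDef) (h₂symm : A₂.IsSymm) :
    euclOpNorm A₂ ≤ euclOpNorm A₁ * Real.sqrt ((A₁⁻¹ * A₂ * A₁⁻¹ * A₂).trace) :=
  stmt_14_general n A₁ A₂ h₁pos h₂symm
end

section
/- Let Cᵏᵢⱼ (i,j,k ∈ {1,2,3}) be real constants with Cᵏᵢⱼ = −Cᵏⱼᵢ satisfying the Jacobi identity Σₗ (Cˡᵢⱼ Cᵐₖₗ + Cˡₖᵢ Cᵐⱼₗ + Cˡⱼₖ Cᵐᵢₗ) = 0 for all i,j,k,m. Let g : ℝ → (3×3 real matrices), E : ℝ → ℝ³ be functions and F : ℝ → (3×3 real matrices) be differentiable with F'ᵢⱼ(t) = Σₖₗ Cᵏᵢⱼ gₖₗ(t) Eˡ(t) for all t. Then the quantity A_{ijk}(t) = Σₗ (Cˡᵢⱼ F_{kl}(t) + Cˡₖᵢ F_{jl}(t) + Cˡⱼₖ F_{il}(t)) is constant in t. -/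
/-!
The evolution equation makes `Ḟ` the image `ad v` of the single vector `v = g E` under the
structure constants, `Ḟ_{kl} = Σₘ Cᵐ_{kl} vₘ`. Inserting this into `A_{ijk}` produces
`Σₘ vₘ` times the Jacobi sum, so `Ȧ = 0` and `A` is constant.
-/

open Finset Matrix

section

variable {ι R : Type*} [Fintype ι]

def closednessConstraint [CommRing R] (C : ι → ι → ι → R) (F : Matrix ι ι R) (i j k : ι) : R :=
  ∑ l, (C l i j * F k l + C l k i * F j l + C l j k * F i l)

theorem closednessConstraint_contraction_eq_zero [CommRing R] {C : ι → ι → ι → R}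
    (hjacobi : ∀ i j k m,
      ∑ l, (C l i j * C m k l + C l k i * C m j l + C l j k * C m i l) = 0)
    (v : ι → R) (i j k : ι) :
    closednessConstraint C (fun a b => ∑ m, C m a b * v m) i j k = 0 := by
  calc closednessConstraint C (fun a b => ∑ m, C m a b * v m) i j k
      = ∑ m, (∑ l, (C l i j * C m k l + C l k i * C m j l + C l j k * C m i l)) * v m := by
        simp only [closednessConstraint, mul_sum, sum_mul, ← sum_add_distrib]
        rw [sum_comm]
        refine sum_congr rfl fun m _ => sum_congr rfl fun l _ => ?_
        ring
    _ = 0 := by simp [hjacobi]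

theorem hasDerivAt_closednessConstraint {𝕜 : Type*} [NontriviallyNormedField 𝕜]
    (C : ι → ι → ι → 𝕜) {F : 𝕜 → Matrix ι ι 𝕜} {F' : Matrix ι ι 𝕜} {t : 𝕜}
    (hF : ∀ a b, HasDerivAt (fun s => F s a b) (F' a b) t) (i j k : ι) :
    HasDerivAt (fun s => closednessConstraint C (F s) i j k)
      (closednessConstraint C F' i j k) t :=
  HasDerivAt.fun_sum fun l _ =>
    (((hF k l).const_mul _).add ((hF j l).const_mul _)).add ((hF i l).const_mul _)

end

theorem stmt_18_general (C : Fin 3 → Fin 3 → Fin 3 → ℝ)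
    (hjacobi : ∀ i j k m,
      ∑ l, (C l i j * C m k l + C l k i * C m j l + C l j k * C m i l) = 0)
    (g : ℝ → Matrix (Fin 3) (Fin 3) ℝ) (E : ℝ → Fin 3 → ℝ)
    (F : ℝ → Matrix (Fin 3) (Fin 3) ℝ)
    (hF : ∀ t i j,
      HasDerivAt (fun s => F s i j) (∑ k, ∑ l, C k i j * g t k l * E t l) t) :
    ∀ (i j k : Fin 3) (t : ℝ),
      ∑ l, (C l i j * F t k l + C l k i * F t j l + C l j k * F t i l) =
      ∑ l, (C l i j * F 0 k l + C l k i * F 0 j l + C l j k * F 0 i l) := by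
  intro i j k t
  have hF' : ∀ s a b, HasDerivAt (fun u => F u a b) (∑ m, C m a b * (g s *ᵥ E s) m) s := by
    intro s a b
    convert hF s a b using 1
    simp only [Matrix.mulVec, dotProduct, mul_sum, mul_assoc]
  have hA : ∀ s, HasDerivAt (fun u => closednessConstraint C (F u) i j k) 0 s := fun s => by
    simpa only [closednessConstraint_contraction_eq_zero hjacobi] using
      hasDerivAt_closednessConstraint C (hF' s) i j k
  exact is_const_of_deriv_eq_zero (fun s => (hA s).differentiableAt) (fun s => (hA s).deriv) t 0

/-- Part (2.9) of Lemma 2.2: if the structure constants `Cᵏᵢⱼ` are antisymmetric and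
satisfy the Jacobi identity, and `F` satisfies the Maxwell evolution equation
`Ḟᵢⱼ = Σₖₗ Cᵏᵢⱼ gₖₗ Eˡ`, then the closedness constraint quantity
`A_{ijk} = Σₗ (Cˡᵢⱼ F_{kl} + Cˡₖᵢ F_{jl} + Cˡⱼₖ F_{il})` is constant in `t`. -/
theorem stmt_18 (C : Fin 3 → Fin 3 → Fin 3 → ℝ)
    (hanti : ∀ k i j, C k i j = -C k j i)
    (hjacobi : ∀ i j k m,
      ∑ l, (C l i j * C m k l + C l k i * C m j l + C l j k * C m i l) = 0)
    (g : ℝ → Matrix (Fin 3) (Fin 3) ℝ) (E : ℝ → Fin 3 → ℝ)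
    (F : ℝ → Matrix (Fin 3) (Fin 3) ℝ)
    (hF : ∀ t i j,
      HasDerivAt (fun s => F s i j) (∑ k, ∑ l, C k i j * g t k l * E t l) t) :
    ∀ (i j k : Fin 3) (t : ℝ),
      ∑ l, (C l i j * F t k l + C l k i * F t j l + C l j k * F t i l) =
      ∑ l, (C l i j * F 0 k l + C l k i * F 0 j l + C l j k * F 0 i l) :=
  stmt_18_general C hjacobi g E F hF
end
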